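/- arXiv:2505.11233 — 5 statements merged into one kernel-verified Lean document; each statement's English description precedes it below -/
import Mathlib

section
/- Let A be a finite set of integers with min(A)=0, max(A)=N, let I be a finite nonempty set of integers, and let τ > N be an integer. Then for any positive integer h with h < τ/N, the set A' = ⋃_{j∈I}(jτ + A) satisfies |hA'| = |hI| · |hA|. -/
open Finset Pointwise

/-- `hsum h A` is the `h`-fold sumset of `A` (pointwise sum of `h` copies). -/
def hsum (h : ℕ) (A : Finset ℤ) : Finset ℤ := ∑ _i ∈ Finset.range h, A

/-- `transl t A` is the translate `t + A`. -/
def transl (t : ℤ) (A : Finset ℤ) : Finset ℤ := A.image (t + ·)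

/-!
Write `A' = τ • I + A` (with `τ • I` the dilate `{jτ : j ∈ I}`), so that `hA' = τ • (hI) + hA`.
Since `hA ⊆ [0, hN]` and `hN < τ`, every element of `τ • (hI) + hA` has a unique representation
`jτ + c` with `j ∈ hI` and `c ∈ hA`: `j` and `c` are its quotient and remainder modulo `τ`.
-/

lemma hsum_eq_nsmul (h : ℕ) (A : Finset ℤ) : hsum h A = h • A := by
  simp [hsum]

lemma biUnion_transl_eq_image_mul_add (I A : Finset ℤ) (τ : ℤ) :
    I.biUnion (fun j => transl (j * τ) A) = I.image (· * τ) + A := by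
  ext x
  simp only [transl, mem_biUnion, mem_image, mem_add, exists_exists_and_eq_and]

theorem Finset.nsmul_subset_Icc {α : Type*} [AddMonoid α] [Preorder α] [DecidableEq α]
    [AddLeftMono α] [AddRightMono α] [LocallyFiniteOrder α] {A : Finset α} {a b : α}
    (hA : A ⊆ Icc a b) : ∀ n : ℕ, n • A ⊆ Icc (n • a) (n • b)
  | 0 => by simp
  | n + 1 => by
    rw [succ_nsmul, succ_nsmul, succ_nsmul]
    exact (add_subset_add (nsmul_subset_Icc hA n) hA).trans (Icc_add_Icc_subset ..)

lemma Int.eq_of_mul_add_eq_mul_add {τ j j' c c' : ℤ} (hc : c ∈ Ico 0 τ) (hc' : c' ∈ Ico 0 τ)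
    (h : j * τ + c = j' * τ + c') : j = j' ∧ c = c' := by
  rw [mem_Ico] at hc hc'
  have hτ : 0 < τ := hc.1.trans_lt hc.2
  obtain ⟨hq, hr⟩ := (Int.ediv_emod_unique (a := j * τ + c) (q := j) hτ).2 ⟨by ring, hc⟩
  obtain ⟨hq', hr'⟩ := (Int.ediv_emod_unique (a := j' * τ + c') (q := j') hτ).2 ⟨by ring, hc'⟩
  rw [h] at hq hr
  exact ⟨hq.symm.trans hq', hr.symm.trans hr'⟩

lemma card_image_mul_add_of_subset_Ico (S C : Finset ℤ) {τ : ℤ} (hC : C ⊆ Ico 0 τ) :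
    #(S.image (· * τ) + C) = #S * #C := by
  have hprod : S.image (· * τ) + C = (S ×ˢ C).image (fun p => p.1 * τ + p.2) := by
    ext x
    simp only [mem_add, mem_image, mem_product, exists_exists_and_eq_and, Prod.exists,
      and_assoc, exists_and_left]
  rw [hprod, card_image_of_injOn, card_product]
  rintro ⟨j, c⟩ hjc ⟨j', c'⟩ hjc' h
  simp only [coe_product, Set.mem_prod, mem_coe] at hjc hjc'
  obtain ⟨rfl, rfl⟩ := Int.eq_of_mul_add_eq_mul_add (hC hjc.2) (hC hjc'.2) h
  rfl

theorem stmt_1_general (A I : Finset ℤ) (hAne : A.Nonempty) (N τ : ℤ)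
    (hmin : A.min' hAne = 0) (hmax : A.max' hAne = N)
    (h : ℕ) (hlt : (h : ℤ) * N < τ) :
    (hsum h (I.biUnion fun j => transl (j * τ) A)).card =
      (hsum h I).card * (hsum h A).card := by
  have hA : A ⊆ Icc 0 N := fun a ha =>
    mem_Icc.2 ⟨hmin ▸ A.min'_le a ha, hmax ▸ A.le_max' a ha⟩
  have hhA : h • A ⊆ Ico 0 τ := fun x hx => by
    have hx' := mem_Icc.1 (nsmul_subset_Icc hA h hx)
    rw [smul_zero, nsmul_eq_mul] at hx'
    exact mem_Ico.2 ⟨hx'.1, hx'.2.trans_lt hlt⟩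
  have hdilate : h • I.image (· * τ) = (h • I).image (· * τ) :=
    (image_nsmul (AddMonoidHom.mulRight τ) I h).symm
  rw [hsum_eq_nsmul, hsum_eq_nsmul, hsum_eq_nsmul, biUnion_transl_eq_image_mul_add, nsmul_add,
    hdilate]
  exact card_image_mul_add_of_subset_Ico _ _ hhA

theorem stmt_1 (A I : Finset ℤ) (hAne : A.Nonempty) (hIne : I.Nonempty) (N τ : ℤ)
    (hmin : A.min' hAne = 0) (hmax : A.max' hAne = N) (hτ : N < τ)
    (h : ℕ) (hh : 1 ≤ h) (hlt : (h : ℤ) * N < τ) :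
    (hsum h (I.biUnion fun j => transl (j * τ) A)).card =
      (hsum h I).card * (hsum h A).card :=
  stmt_1_general A I hAne N τ hmin hmax h hlt
end

section
/- If X ⊆ ℤ is finite with hX = A₁ ∪ [b, hN - c] ∪ (hN - A₂) where A₁ ⊆ [0, b-2], A₂ ⊆ [0, c-2], and τ ≥ max(b,c) and b + τ ≤ hN - c + 1, then for the union of two translates: (hX) ∪ (τ + hX) = A₁ ∪ [b, τ + hN - c] ∪ (τ + hN - A₂). -/
open Finset Pointwise

/-!
Only the shape of `hX` matters, not that the set is a sumset. The two copies of the middle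
interval `[b, hN - c]` overlap or abut because `b + τ ≤ hN - c + 1`, so together they fill
`[b, τ + hN - c]`. This interval swallows the translated head `τ + A₁` (as `τ ≥ b`) and the
untranslated tail `hN - A₂` (as `τ ≥ c`), leaving `A₁` and `τ + hN - A₂` as the new head and tail.
-/

theorem transl_union (t : ℤ) (A B : Finset ℤ) :
    transl t (A ∪ B) = transl t A ∪ transl t B :=
  image_union _ _

theorem transl_image_sub (t m : ℤ) (A : Finset ℤ) :
    transl t (A.image (m - ·)) = A.image (fun a => t + m - a) := by
  simp only [transl, image_image, Function.comp_def, add_sub_assoc]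

theorem Icc_union_transl_Icc {a b t : ℤ} (ht : 0 ≤ t) (hab : a + t ≤ b + 1) :
    Icc a b ∪ transl t (Icc a b) = Icc a (t + b) := by
  ext x
  simp only [transl, mem_union, mem_image, mem_Icc]
  constructor
  · rintro (hx | ⟨y, hy, rfl⟩) <;> omega
  · intro hx
    by_cases hxb : x ≤ b
    · exact Or.inl ⟨hx.1, hxb⟩
    · exact Or.inr ⟨x - t, by omega, by ring⟩

theorem transl_subset_Icc {A : Finset ℤ} {b m t : ℤ} (hA : A ⊆ Icc 0 (b - 2))
    (hbt : b ≤ t) (hbig : b + t ≤ m + 1) : transl t A ⊆ Icc b (t + m) := by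
  intro x hx
  obtain ⟨a, ha, rfl⟩ := mem_image.mp hx
  have := mem_Icc.mp (hA ha)
  exact mem_Icc.mpr ⟨by omega, by omega⟩

theorem image_sub_subset_Icc {A : Finset ℤ} {b c M t : ℤ} (hA : A ⊆ Icc 0 (c - 2))
    (hct : c ≤ t) (hbig : b + t ≤ M - c + 1) : A.image (M - ·) ⊆ Icc b (t + M - c) := by
  intro x hx
  obtain ⟨a, ha, rfl⟩ := mem_image.mp hx
  have := mem_Icc.mp (hA ha)
  exact mem_Icc.mpr ⟨by omega, by omega⟩

theorem union_transl_eq_of_eq_union_Icc {S A₁ A₂ : Finset ℤ} {M b c τ : ℤ}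
    (hS : S = A₁ ∪ Icc b (M - c) ∪ A₂.image (M - ·))
    (hA₁ : A₁ ⊆ Icc 0 (b - 2)) (hA₂ : A₂ ⊆ Icc 0 (c - 2))
    (hτ0 : 0 ≤ τ) (hbτ : b ≤ τ) (hcτ : c ≤ τ) (hbig : b + τ ≤ M - c + 1) :
    S ∪ transl τ S = A₁ ∪ Icc b (τ + M - c) ∪ A₂.image (fun a => τ + M - a) := by
  have hJ : Icc b (M - c) ∪ transl τ (Icc b (M - c)) = Icc b (τ + M - c) := by
    rw [Icc_union_transl_Icc hτ0 hbig, add_sub_assoc]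
  have hhead : transl τ A₁ ⊆ Icc b (τ + M - c) := by
    rw [add_sub_assoc]
    exact transl_subset_Icc hA₁ hbτ hbig
  have htail : A₂.image (M - ·) ⊆ Icc b (τ + M - c) := image_sub_subset_Icc hA₂ hcτ hbig
  rw [← hJ] at hhead htail
  rw [hS, transl_union, transl_union, transl_image_sub, ← hJ]
  ext x
  have hx₁ := @hhead x
  have hx₂ := @htail x
  simp only [mem_union] at hx₁ hx₂ ⊢
  tauto

theorem stmt_2_general (X A₁ A₂ : Finset ℤ) (h : ℕ) (N b c τ : ℤ)
    (hτ0 : 0 ≤ τ)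
    (hX : hsum h X = A₁ ∪ Finset.Icc b ((h : ℤ) * N - c) ∪ A₂.image (fun a => (h : ℤ) * N - a))
    (hA₁ : A₁ ⊆ Finset.Icc 0 (b - 2)) (hA₂ : A₂ ⊆ Finset.Icc 0 (c - 2))
    (hτ : max b c ≤ τ) (hbig : b + τ ≤ (h : ℤ) * N - c + 1) :
    hsum h X ∪ transl τ (hsum h X) =
      A₁ ∪ Finset.Icc b (τ + (h : ℤ) * N - c) ∪
        A₂.image (fun a => τ + (h : ℤ) * N - a) :=
  union_transl_eq_of_eq_union_Icc hX hA₁ hA₂ hτ0 (max_le_iff.mp hτ).1 (max_le_iff.mp hτ).2 hbig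

theorem stmt_2 (X A₁ A₂ : Finset ℤ) (h : ℕ) (N b c τ : ℤ)
    (hN : 0 ≤ N) (hb : 0 ≤ b) (hc : 0 ≤ c) (hτ0 : 0 ≤ τ)
    (hX : hsum h X = A₁ ∪ Finset.Icc b ((h : ℤ) * N - c) ∪ A₂.image (fun a => (h : ℤ) * N - a))
    (hA₁ : A₁ ⊆ Finset.Icc 0 (b - 2)) (hA₂ : A₂ ⊆ Finset.Icc 0 (c - 2))
    (hτ : max b c ≤ τ) (hbig : b + τ ≤ (h : ℤ) * N - c + 1) :
    hsum h X ∪ transl τ (hsum h X) =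
      A₁ ∪ Finset.Icc b (τ + (h : ℤ) * N - c) ∪
        A₂.image (fun a => τ + (h : ℤ) * N - a) :=
  stmt_2_general X A₁ A₂ h N b c τ hτ0 hX hA₁ hA₂ hτ hbig
end

section
/- Let H ≥ 2 be an integer and I = {0,1,2} ∪ {2H} ⊆ ℤ. Then for every positive integer h, hI = ⋃_{i=0}^{h} (2Hi + [0, 2(h-i)]), where [0,k] denotes the integer interval. -/
/-!
Adding `[0, k] ∪ {d}` to `⋃_{i ≤ h} [d i, d i + k (h - i)]` lengthens every interval by `k` and
also shifts every interval by `d`. Each shifted interval `[d (i+1), d (i+1) + k (h - i)]` lies in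
the lengthened interval of index `i + 1`, except for `i = h`, which gives the new point
`d (h + 1)`. So the union for `h` turns into the union for `h + 1`, and induction on `h` finishes.
-/

open Finset Pointwise

noncomputable def intervalLadder (d k : ℤ) (h : ℕ) : Finset ℤ :=
  (range (h + 1)).biUnion fun i => Icc (d * i) (d * i + k * ((h : ℤ) - i))

lemma hsum_zero (A : Finset ℤ) : hsum 0 A = {0} := rfl

lemma hsum_succ (h : ℕ) (A : Finset ℤ) : hsum (h + 1) A = hsum h A + A :=
  sum_range_succ _ h

lemma mem_intervalLadder {d k x : ℤ} {h : ℕ} :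
    x ∈ intervalLadder d k h ↔ ∃ i ≤ h, d * i ≤ x ∧ x ≤ d * i + k * ((h : ℤ) - i) := by
  simp [intervalLadder]

lemma intervalLadder_zero (d k : ℤ) : intervalLadder d k 0 = {0} := by
  ext x; simp [mem_intervalLadder]; omega

lemma intervalLadder_add {k : ℤ} (hk : 0 ≤ k) (d : ℤ) (h : ℕ) :
    intervalLadder d k h + (Icc 0 k ∪ {d}) = intervalLadder d k (h + 1) := by
  ext x
  simp only [mem_add, mem_intervalLadder, mem_union, mem_Icc, mem_singleton]
  push_cast
  have hk_split (i : ℤ) : k * ((h : ℤ) + 1 - i) = k * ((h : ℤ) - i) + k := by ring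
  have hd_succ (i : ℤ) : d * (i + 1) = d * i + d := mul_add_one d i
  constructor
  · rintro ⟨y, ⟨i, hi, hy_lo, hy_hi⟩, z, ⟨hz_lo, hz_hi⟩ | rfl, rfl⟩
    · exact ⟨i, by omega, by linarith, by linarith [hk_split i]⟩
    · refine ⟨i + 1, by omega, ?_⟩
      push_cast
      constructor <;> linarith [hd_succ i]
  · rintro ⟨i, hi, hx_lo, hx_hi⟩
    obtain hi | rfl := hi.lt_or_eq
    · have hk_mul : 0 ≤ k * ((h : ℤ) - i) := mul_nonneg hk (by omega)
      obtain ⟨z, hz, hy_lo, hy_hi⟩ : ∃ z, (0 ≤ z ∧ z ≤ k) ∧ d * i ≤ x - z ∧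
          x - z ≤ d * i + k * ((h : ℤ) - i) := by
        rcases le_total k (x - d * i) with hkx | hxk
        · exact ⟨k, ⟨hk, le_rfl⟩, by linarith [hk_split i], by linarith⟩
        · exact ⟨x - d * i, ⟨by linarith, hxk⟩, by linarith, by linarith [hk_split i]⟩
      exact ⟨x - z, ⟨i, by omega, hy_lo, hy_hi⟩, z, Or.inl hz, by ring⟩
    · push_cast at hx_lo hx_hi
      exact ⟨d * h, ⟨h, le_rfl, le_rfl, by simp⟩, d, Or.inr rfl, by linarith⟩

lemma hsum_Icc_union_singleton {k : ℤ} (hk : 0 ≤ k) (d : ℤ) (h : ℕ) :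
    hsum h (Icc 0 k ∪ {d}) = intervalLadder d k h := by
  induction h with
  | zero => rw [hsum_zero, intervalLadder_zero]
  | succ h ih => rw [hsum_succ, ih, intervalLadder_add hk]

theorem stmt_4_general (H : ℕ) (h : ℕ) :
    hsum h ({0, 1, 2} ∪ {2 * (H : ℤ)}) =
      (Finset.range (h + 1)).biUnion fun i =>
        Finset.Icc (2 * (H : ℤ) * i) (2 * (H : ℤ) * i + 2 * ((h : ℤ) - i)) := by
  rw [show ({0, 1, 2} : Finset ℤ) = Icc 0 2 by decide]
  exact hsum_Icc_union_singleton zero_le_two _ h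

theorem stmt_4 (H : ℕ) (hH : 2 ≤ H) (h : ℕ) (hh : 1 ≤ h) :
    hsum h ({0, 1, 2} ∪ {2 * (H : ℤ)}) =
      (Finset.range (h + 1)).biUnion fun i =>
        Finset.Icc (2 * (H : ℤ) * i) (2 * (H : ℤ) * i + 2 * ((h : ℤ) - i)) :=
  stmt_4_general H h
end

section
/- Let H ≥ 2 be an integer and J = {0,1} ∪ {2H-1, 2H}. Then for every positive integer h, hJ = ⋃_{i=0}^{h} (2Hi + [-i, h-i]), where [a,b] denotes the integer interval. -/
/-!
Since `J = {0, 1} + {0, 2H - 1}` and `h`-fold sumsets distribute over sums,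
`hJ = h{0, 1} + h{0, 2H - 1} = [0, h] + {(2H - 1) i : 0 ≤ i ≤ h}`,
which is the union of the translates `(2H - 1) i + [0, h]`.
-/

open Finset Pointwise

lemma hsum_add (h : ℕ) (A B : Finset ℤ) : hsum h (A + B) = hsum h A + hsum h B :=
  sum_add_distrib

lemma hsum_zero_one (h : ℕ) : hsum h {0, 1} = Icc 0 (h : ℤ) := by
  induction h with
  | zero => rfl
  | succ h ih =>
    ext x
    simp only [hsum_succ, ih, mem_add, mem_Icc, mem_insert, mem_singleton]
    push_cast
    constructor
    · rintro ⟨a, ha, b, rfl | rfl, rfl⟩ <;> omega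
    · intro hx
      by_cases hxh : x ≤ h
      · exact ⟨x, ⟨hx.1, hxh⟩, 0, by simp, add_zero x⟩
      · exact ⟨x - 1, by omega, 1, by simp, sub_add_cancel x 1⟩

lemma hsum_zero_pair (c : ℤ) (h : ℕ) :
    hsum h {0, c} = (range (h + 1)).image fun i : ℕ => c * i := by
  induction h with
  | zero => rw [zero_add, range_one, image_singleton, Nat.cast_zero, mul_zero]; rfl
  | succ h ih =>
    ext x
    simp only [hsum_succ, ih, mem_add, mem_image, mem_range, mem_insert, mem_singleton]
    constructor
    · rintro ⟨_, ⟨i, hi, rfl⟩, b, rfl | rfl, rfl⟩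
      · exact ⟨i, by omega, (add_zero _).symm⟩
      · exact ⟨i + 1, by omega, by push_cast; ring⟩
    · rintro ⟨i, hi, rfl⟩
      rcases Nat.lt_succ_iff_lt_or_eq.mp hi with hi | rfl
      · exact ⟨c * i, ⟨i, hi, rfl⟩, 0, by simp, add_zero _⟩
      · exact ⟨c * h, ⟨h, by omega, rfl⟩, c, by simp, by push_cast; ring⟩

lemma Icc_add_image {α ι : Type*} [AddCommGroup α] [LinearOrder α] [IsOrderedAddMonoid α]
    [LocallyFiniteOrder α] [DecidableEq α] (a b : α) (s : Finset ι) (f : ι → α) :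
    Icc a b + s.image f = s.biUnion fun i => Icc (a + f i) (b + f i) := by
  rw [show Icc a b + s.image f = image₂ (· + ·) (Icc a b) (s.image f) from rfl,
    ← biUnion_image_right, image_biUnion]
  simp only [image_add_right_Icc]

lemma zero_one_union_eq_add (M : ℤ) :
    ({0, 1} ∪ {M - 1, M} : Finset ℤ) = {0, 1} + {0, M - 1} := by
  ext x
  simp only [mem_union, mem_insert, mem_singleton, mem_add, exists_eq_or_imp, exists_eq_left]
  omega

theorem stmt_7_general (H : ℕ) (h : ℕ) :
    hsum h ({0, 1} ∪ {2 * (H : ℤ) - 1, 2 * (H : ℤ)}) =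
      (Finset.range (h + 1)).biUnion fun i =>
        Finset.Icc (2 * (H : ℤ) * i - i) (2 * (H : ℤ) * i + ((h : ℤ) - i)) := by
  rw [zero_one_union_eq_add, hsum_add, hsum_zero_one, hsum_zero_pair, Icc_add_image]
  refine biUnion_congr rfl fun i _ => ?_
  congr 1 <;> ring

theorem stmt_7 (H : ℕ) (hH : 2 ≤ H) (h : ℕ) (hh : 1 ≤ h) :
    hsum h ({0, 1} ∪ {2 * (H : ℤ) - 1, 2 * (H : ℤ)}) =
      (Finset.range (h + 1)).biUnion fun i =>
        Finset.Icc (2 * (H : ℤ) * i - i) (2 * (H : ℤ) * i + ((h : ℤ) - i)) :=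
  stmt_7_general H h
end

section
/- For every integer m ≥ 3 there exist finite sets A, B of integers with |A| = |B| and an increasing sequence of positive integers h₁ < h₂ < ... < h_m such that |h_iA| > |h_iB| if i is odd and |h_iA| < |h_iB| if i is even. -/
/-!
The `h`-fold sumset of `{0, K, K + 1}` is `{a K + b : b ≤ a ≤ h}`. For `h < K` these numbers are
distinct, so its size does not depend on `K`; once `K² ≤ h` it fills most of `[0, h (K + 1)]`, so
its size lies between `h K` and `2 h K`.

Write `K_j = 10 ^ 10 ^ j` and take `A`, `B` with base-`N` digits, `N` huge, where the `j`-th digit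
ranges over such a triple with parameter `K_j ^ 3` or `K_j`: the large one at odd `j` for `A` and
at even `j` for `B`. Then `|A| = |B| = 3 ^ (m + 1)`, and `|h A|`, `|h B|` are the products of the
sizes of the `h`-fold sumsets of their digits. At `h_i = K_i ^ 7` the digits `j > i` contribute
equal factors, and among the digits `j ≤ i` the factor `K_i ^ 2` won at `j = i` beats the factor
`2 ^ (i + 1) ∏_{j < i} K_j ^ 2` lost at the others, so the parity of `i` decides the comparison.
-/

open Finset Pointwise

lemma eq_and_eq_of_add_mul_eq {N x₁ x₂ y₁ y₂ : ℤ} (h₁ : x₁ ∈ Ico 0 N) (h₂ : x₂ ∈ Ico 0 N)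
    (h : x₁ + N * y₁ = x₂ + N * y₂) : x₁ = x₂ ∧ y₁ = y₂ := by
  rw [mem_Ico] at h₁ h₂
  have hN : 0 < N := by omega
  obtain ⟨hy₁, hx₁⟩ := (Int.ediv_emod_unique hN).2 ⟨h, h₁⟩
  obtain ⟨hy₂, hx₂⟩ := (Int.ediv_emod_unique hN).2 ⟨rfl, h₂⟩
  exact ⟨hx₁.symm.trans hx₂, hy₁.symm.trans hy₂⟩

lemma card_add_image_mul {N : ℤ} {X : Finset ℤ} (hX : X ⊆ Ico 0 N) (Y : Finset ℤ) :
    (X + Y.image (N * ·)).card = X.card * Y.card := by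
  change (image₂ (· + ·) X (Y.image (N * ·))).card = _
  rw [image₂_image_right, card_image₂_iff]
  rintro ⟨x₁, y₁⟩ hp ⟨x₂, y₂⟩ hq he
  rw [Set.mem_prod] at hp hq
  obtain ⟨rfl, rfl⟩ := eq_and_eq_of_add_mul_eq (hX hp.1) (hX hq.1) he
  rfl

def digitSum (N : ℤ) (F : ℕ → Finset ℤ) (n : ℕ) : Finset ℤ :=
  ∑ j ∈ range n, (F j).image (N ^ j * ·)

lemma digitSum_succ (N : ℤ) (F : ℕ → Finset ℤ) (n : ℕ) :
    digitSum N F (n + 1) = F 0 + (digitSum N (fun j => F (j + 1)) n).image (N * ·) := by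
  have hmul : ∀ X : Finset ℤ, X.image (N * ·) = imageAddMonoidHom (AddMonoidHom.mulLeft N) X :=
    fun _ => rfl
  rw [digitSum, sum_range_succ', add_comm, digitSum, hmul, map_sum]
  congr 1
  · simp
  · refine sum_congr rfl fun j _ => ?_
    rw [← hmul, image_image]
    congr 1
    funext x
    simp only [Function.comp_apply, pow_succ']
    ring

lemma card_digitSum {N : ℤ} {F : ℕ → Finset ℤ} {n : ℕ} (hF : ∀ j < n, F j ⊆ Ico 0 N) :
    (digitSum N F n).card = ∏ j ∈ range n, (F j).card := by
  induction n generalizing F with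
  | zero => simp [digitSum]
  | succ n ih =>
    rw [digitSum_succ, card_add_image_mul (hF 0 n.succ_pos), ih (fun j hj => hF _ (by omega)),
      prod_range_succ', mul_comm]

lemma hsum_digitSum (h : ℕ) (N : ℤ) (F : ℕ → Finset ℤ) (n : ℕ) :
    hsum h (digitSum N F n) = digitSum N (fun j => hsum h (F j)) n := by
  simp only [hsum_eq_nsmul, digitSum, ← sum_nsmul]
  refine sum_congr rfl fun j _ => ?_
  exact (map_nsmul (imageAddMonoidHom (AddMonoidHom.mulLeft (N ^ j))) h (F j)).symm

def gapTriple (K : ℕ) : Finset ℤ := {0, (K : ℤ), (K + 1 : ℤ)}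

def triangle (h : ℕ) : Finset (ℕ × ℕ) := (range (h + 1) ×ˢ range (h + 1)).filter fun p => p.2 ≤ p.1

lemma mem_triangle {h : ℕ} {p : ℕ × ℕ} : p ∈ triangle h ↔ p.2 ≤ p.1 ∧ p.1 ≤ h := by
  simp only [triangle, mem_filter, mem_product, mem_range]
  omega

lemma hsum_gapTriple (h K : ℕ) :
    hsum h (gapTriple K) = (triangle h).image fun p => ((p.1 * K + p.2 : ℕ) : ℤ) := by
  induction h with
  | zero =>
    ext x
    simp [hsum, mem_triangle, eq_comm]
  | succ h ih =>
    ext x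
    rw [hsum_succ, ih]
    simp only [mem_add, mem_image, mem_triangle, gapTriple, mem_insert,
      mem_singleton, Prod.exists]
    constructor
    · rintro ⟨_, ⟨a, b, ⟨hba, hah⟩, rfl⟩, y, hy, rfl⟩
      rcases hy with rfl | rfl | rfl
      · exact ⟨a, b, ⟨hba, by omega⟩, by push_cast; ring⟩
      · exact ⟨a + 1, b, ⟨by omega, by omega⟩, by push_cast; ring⟩
      · exact ⟨a + 1, b + 1, ⟨by omega, by omega⟩, by push_cast; ring⟩
    · rintro ⟨a, b, ⟨hba, hah⟩, rfl⟩
      by_cases ha : a ≤ h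
      · exact ⟨_, ⟨a, b, ⟨hba, ha⟩, rfl⟩, 0, by simp, by simp⟩
      obtain rfl : a = h + 1 := by omega
      by_cases hb : b ≤ h
      · exact ⟨_, ⟨h, b, ⟨hb, le_rfl⟩, rfl⟩, K, by simp, by push_cast; ring⟩
      obtain rfl : b = h + 1 := by omega
      exact ⟨_, ⟨h, h, ⟨le_rfl, le_rfl⟩, rfl⟩, K + 1, by simp, by push_cast; ring⟩

lemma natCast_mem_hsum_gapTriple {h K a b : ℕ} (hba : b ≤ a) (hah : a ≤ h) :
    ((a * K + b : ℕ) : ℤ) ∈ hsum h (gapTriple K) := by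
  rw [hsum_gapTriple]
  exact mem_image_of_mem _ (mem_triangle (p := (a, b)).2 ⟨hba, hah⟩)

lemma card_hsum_gapTriple_of_lt {h K : ℕ} (hK : h < K) :
    (hsum h (gapTriple K)).card = (triangle h).card := by
  rw [hsum_gapTriple]
  refine card_image_of_injOn fun p hp q hq hpq => ?_
  rw [mem_coe, mem_triangle] at hp hq
  have hpq' : (p.2 : ℤ) + K * p.1 = q.2 + K * q.1 := by push_cast at hpq; linarith
  obtain ⟨hb, ha⟩ := eq_and_eq_of_add_mul_eq (by simp; omega) (by simp; omega) hpq'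
  exact Prod.ext (by exact_mod_cast ha) (by exact_mod_cast hb)

lemma hsum_gapTriple_subset (h K : ℕ) :
    hsum h (gapTriple K) ⊆ (range (h * (K + 1) + 1)).image (Nat.cast : ℕ → ℤ) := by
  rw [hsum_gapTriple]
  refine image_subset_iff.2 fun p hp => mem_image_of_mem _ ?_
  rw [mem_triangle] at hp
  rw [mem_range]
  nlinarith

lemma card_hsum_gapTriple_le (h K : ℕ) : (hsum h (gapTriple K)).card ≤ h * (K + 1) + 1 :=
  (card_le_card (hsum_gapTriple_subset h K)).trans (card_image_le.trans (card_range _).le)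

lemma lt_card_hsum_gapTriple {h K : ℕ} (hK : 0 < K) (hh : K * K ≤ h) :
    h * K < (hsum h (gapTriple K)).card := by
  have hsub : (Icc ((K - 1) * K) (h * (K + 1))).image (Nat.cast : ℕ → ℤ) ⊆
      hsum h (gapTriple K) := by
    refine image_subset_iff.2 fun n hn => ?_
    rw [mem_Icc] at hn
    by_cases hq : n / K ≤ h
    · have hr := Nat.mod_lt n hK
      have : K - 1 ≤ n / K := (Nat.le_div_iff_mul_le hK).2 hn.1
      rw [← Nat.div_add_mod' n K]
      exact natCast_mem_hsum_gapTriple (by omega) hq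
    · have : h * K ≤ n := by nlinarith [Nat.div_mul_le_self n K]
      obtain ⟨b, rfl⟩ := Nat.exists_eq_add_of_le this
      exact natCast_mem_hsum_gapTriple (by nlinarith) le_rfl
  have := card_le_card hsub
  rw [card_image_of_injective _ Nat.cast_injective, Nat.card_Icc] at this
  have : (K - 1) * K ≤ K * K := Nat.mul_le_mul_right _ (Nat.sub_le _ _)
  have : h * (K + 1) = h * K + h := by ring
  omega

lemma card_gapTriple {K : ℕ} (hK : 0 < K) : (gapTriple K).card = 3 := by
  rw [gapTriple, card_insert_of_notMem (by simp; omega), card_pair (by simp)]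

def scale (j : ℕ) : ℕ := 10 ^ 10 ^ j

lemma ten_le_scale (j : ℕ) : 10 ≤ scale j :=
  Nat.le_self_pow (pow_ne_zero j (by norm_num)) 10

lemma scale_pos (j : ℕ) : 0 < scale j := by
  have := ten_le_scale j
  omega

lemma scale_succ (j : ℕ) : scale (j + 1) = scale j ^ 10 := by
  rw [scale, scale, pow_succ, pow_mul]

lemma scale_strictMono : StrictMono scale := fun _ _ hij =>
  Nat.pow_lt_pow_right (by norm_num) (Nat.pow_lt_pow_right (by norm_num) hij)

lemma scale_pow_seven_lt {i j : ℕ} (hij : i < j) : scale i ^ 7 < scale j :=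
  calc scale i ^ 7 < scale i ^ 10 := by
        have := ten_le_scale i
        exact Nat.pow_lt_pow_right (by omega) (by norm_num)
    _ = scale (i + 1) := (scale_succ i).symm
    _ ≤ scale j := scale_strictMono.monotone hij

lemma two_pow_mul_prod_sq_le_scale (i : ℕ) :
    2 ^ (i + 1) * ∏ j ∈ range i, scale j ^ 2 ≤ scale i := by
  induction i with
  | zero => simpa using (ten_le_scale 0).trans' (by norm_num)
  | succ i ih =>
    have h10 := ten_le_scale i
    calc 2 ^ (i + 2) * ∏ j ∈ range (i + 1), scale j ^ 2
        = 2 * (2 ^ (i + 1) * ∏ j ∈ range i, scale j ^ 2) * scale i ^ 2 := by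
          rw [prod_range_succ]; ring
      _ ≤ scale i * scale i * scale i ^ 2 := by gcongr; omega
      _ = scale i ^ 4 := by ring
      _ ≤ scale i ^ 10 := Nat.pow_le_pow_right (scale_pos i) (by norm_num)
      _ = scale (i + 1) := (scale_succ i).symm

def digitParam (s j : ℕ) : ℕ := if j % 2 = s % 2 then scale j ^ 3 else scale j

lemma scale_le_digitParam (s j : ℕ) : scale j ≤ digitParam s j := by
  unfold digitParam
  split
  · exact Nat.le_self_pow (by norm_num) _
  · exact le_rfl

lemma digitParam_le (s j : ℕ) : digitParam s j ≤ scale j ^ 3 := by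
  unfold digitParam
  split
  · exact le_rfl
  · exact Nat.le_self_pow (by norm_num) _

lemma ten_le_digitParam (s j : ℕ) : 10 ≤ digitParam s j :=
  (ten_le_scale j).trans (scale_le_digitParam s j)

lemma two_pow_mul_prod_digitParam_le {s t i : ℕ} (hs : s % 2 = i % 2) (ht : t % 2 ≠ i % 2) :
    2 ^ (i + 1) * ∏ j ∈ range (i + 1), digitParam t j ≤ ∏ j ∈ range (i + 1), digitParam s j := by
  have hti : digitParam t i = scale i := if_neg (Ne.symm ht)
  have hsi : digitParam s i = scale i ^ 3 := if_pos hs.symm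
  have hT : ∏ j ∈ range i, digitParam t j ≤
      (∏ j ∈ range i, scale j ^ 2) * ∏ j ∈ range i, scale j := by
    rw [← prod_mul_distrib]
    exact prod_le_prod' fun j _ => (digitParam_le t j).trans_eq (by ring)
  have hS : ∏ j ∈ range i, scale j ≤ ∏ j ∈ range i, digitParam s j :=
    prod_le_prod' fun j _ => scale_le_digitParam s j
  rw [prod_range_succ, prod_range_succ, hti, hsi]
  calc 2 ^ (i + 1) * ((∏ j ∈ range i, digitParam t j) * scale i)
      ≤ 2 ^ (i + 1) * ((∏ j ∈ range i, scale j ^ 2) * (∏ j ∈ range i, scale j) * scale i) := by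
        gcongr
    _ = (2 ^ (i + 1) * ∏ j ∈ range i, scale j ^ 2) * (∏ j ∈ range i, scale j) * scale i := by ring
    _ ≤ scale i * (∏ j ∈ range i, digitParam s j) * scale i := by
        gcongr; exact two_pow_mul_prod_sq_le_scale i
    _ = (∏ j ∈ range i, digitParam s j) * (scale i * scale i * 1) := by ring
    _ ≤ (∏ j ∈ range i, digitParam s j) * scale i ^ 3 := by
        rw [pow_succ, sq]; gcongr; exact scale_pos i

def witness (m s : ℕ) : Finset ℤ :=
  digitSum (scale m ^ 11 : ℕ) (fun j => gapTriple (digitParam s j)) (m + 1)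

lemma hsum_gapTriple_digitParam_subset {m s h j : ℕ} (hh : h ≤ scale m ^ 7) (hj : j ≤ m) :
    hsum h (gapTriple (digitParam s j)) ⊆ Ico 0 ((scale m ^ 11 : ℕ) : ℤ) := by
  refine (hsum_gapTriple_subset h _).trans (image_subset_iff.2 fun n hn => ?_)
  have hP : digitParam s j ≤ scale m ^ 3 :=
    (digitParam_le s j).trans (Nat.pow_le_pow_left (scale_strictMono.monotone hj) 3)
  have h10 := ten_le_scale m
  have : h * (digitParam s j + 1) + 1 ≤ scale m ^ 11 :=
    calc h * (digitParam s j + 1) + 1 ≤ scale m ^ 7 * (scale m ^ 3 + 1) + 1 := by gcongr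
      _ = scale m ^ 10 + scale m ^ 7 + 1 := by ring
      _ ≤ scale m * scale m ^ 10 := by
          have : scale m ^ 7 ≤ scale m ^ 10 := Nat.pow_le_pow_right (by omega) (by norm_num)
          have : 1 ≤ scale m ^ 7 := Nat.one_le_pow _ _ (by omega)
          nlinarith
      _ = scale m ^ 11 := by ring
  rw [mem_range] at hn
  rw [mem_Ico]
  omega

lemma card_hsum_witness {m h : ℕ} (s : ℕ) (hh : h ≤ scale m ^ 7) :
    (hsum h (witness m s)).card =
      ∏ j ∈ range (m + 1), (hsum h (gapTriple (digitParam s j))).card := by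
  rw [witness, hsum_digitSum,
    card_digitSum fun j hj => hsum_gapTriple_digitParam_subset hh (Nat.lt_succ_iff.1 hj)]

lemma card_witness (m s : ℕ) : (witness m s).card = 3 ^ (m + 1) := by
  have := card_hsum_witness (h := 1) (m := m) s (Nat.one_le_pow _ _ (scale_pos m))
  simp only [hsum_eq_nsmul, one_nsmul] at this
  rw [this, prod_congr rfl fun j _ => card_gapTriple (by have := ten_le_digitParam s j; omega),
    prod_const, card_range]

lemma prod_card_hsum_lt {s t i : ℕ} (hs : s % 2 = i % 2) (ht : t % 2 ≠ i % 2) :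
    ∏ j ∈ range (i + 1), (hsum (scale i ^ 7) (gapTriple (digitParam t j))).card <
      ∏ j ∈ range (i + 1), (hsum (scale i ^ 7) (gapTriple (digitParam s j))).card := by
  set h := scale i ^ 7
  have hh : 1 ≤ h := Nat.one_le_pow _ _ (scale_pos i)
  have upper : ∀ j ∈ range (i + 1),
      (hsum h (gapTriple (digitParam t j))).card ≤ 2 * h * digitParam t j := fun j _ => by
    have := ten_le_digitParam t j
    nlinarith [card_hsum_gapTriple_le h (digitParam t j)]
  have lower : ∀ j ∈ range (i + 1),
      h * digitParam s j < (hsum h (gapTriple (digitParam s j))).card := fun j hj => by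
    refine lt_card_hsum_gapTriple (by have := ten_le_digitParam s j; omega) ?_
    calc digitParam s j * digitParam s j ≤ scale j ^ 3 * scale j ^ 3 :=
          Nat.mul_le_mul (digitParam_le s j) (digitParam_le s j)
      _ = scale j ^ 6 := by ring
      _ ≤ scale i ^ 6 :=
          Nat.pow_le_pow_left (scale_strictMono.monotone (Nat.lt_succ_iff.1 (mem_range.1 hj))) 6
      _ ≤ h := Nat.pow_le_pow_right (scale_pos i) (by norm_num)
  calc ∏ j ∈ range (i + 1), (hsum h (gapTriple (digitParam t j))).card
      ≤ ∏ j ∈ range (i + 1), 2 * h * digitParam t j := prod_le_prod' upper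
    _ = h ^ (i + 1) * (2 ^ (i + 1) * ∏ j ∈ range (i + 1), digitParam t j) := by
        rw [prod_mul_distrib, prod_mul_distrib, prod_const, prod_const, card_range]; ring
    _ ≤ h ^ (i + 1) * ∏ j ∈ range (i + 1), digitParam s j := by
        gcongr; exact two_pow_mul_prod_digitParam_le hs ht
    _ = ∏ j ∈ range (i + 1), h * digitParam s j := by
        rw [prod_mul_distrib, prod_const, card_range]
    _ < ∏ j ∈ range (i + 1), (hsum h (gapTriple (digitParam s j))).card :=
        prod_lt_prod_of_nonempty
          (fun j _ => Nat.mul_pos hh (by have := ten_le_digitParam s j; omega))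
          lower nonempty_range_add_one

lemma card_hsum_witness_lt {m s t i : ℕ} (hi : i ≤ m) (hs : s % 2 = i % 2) (ht : t % 2 ≠ i % 2) :
    (hsum (scale i ^ 7) (witness m t)).card < (hsum (scale i ^ 7) (witness m s)).card := by
  have hh : scale i ^ 7 ≤ scale m ^ 7 := Nat.pow_le_pow_left (scale_strictMono.monotone hi) 7
  rw [card_hsum_witness t hh, card_hsum_witness s hh,
    ← prod_range_mul_prod_Ico _ (Nat.succ_le_succ hi),
    ← prod_range_mul_prod_Ico _ (Nat.succ_le_succ hi)]
  have tail : ∏ j ∈ Ico (i + 1) (m + 1), (hsum (scale i ^ 7) (gapTriple (digitParam t j))).card =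
      ∏ j ∈ Ico (i + 1) (m + 1), (hsum (scale i ^ 7) (gapTriple (digitParam s j))).card :=
    prod_congr rfl fun j hj => by
      have hij := scale_pow_seven_lt (Nat.succ_le_iff.1 (mem_Ico.1 hj).1)
      rw [card_hsum_gapTriple_of_lt (hij.trans_le (scale_le_digitParam t j)),
        card_hsum_gapTriple_of_lt (hij.trans_le (scale_le_digitParam s j))]
  rw [tail]
  exact Nat.mul_lt_mul_of_pos_right (prod_card_hsum_lt hs ht)
    (prod_pos fun j _ => card_pos.2 ⟨_, natCast_mem_hsum_gapTriple le_rfl (Nat.zero_le _)⟩)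

theorem stmt_12_general (m : ℕ) :
    ∃ A B : Finset ℤ, ∃ hs : ℕ → ℕ,
      A.Nonempty ∧ B.Nonempty ∧ A.card = B.card ∧
      StrictMonoOn hs (Finset.Icc 1 m) ∧ (∀ i, 1 ≤ i → i ≤ m → 0 < hs i) ∧
      ∀ i, 1 ≤ i → i ≤ m →
        (Odd i → (hsum (hs i) B).card < (hsum (hs i) A).card) ∧
        (Even i → (hsum (hs i) A).card < (hsum (hs i) B).card) := by
  refine ⟨witness m 1, witness m 0, fun i => scale i ^ 7, ?_, ?_, ?_, ?_, ?_, ?_⟩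
  · exact card_pos.1 (by rw [card_witness]; positivity)
  · exact card_pos.1 (by rw [card_witness]; positivity)
  · rw [card_witness, card_witness]
  · exact fun i _ j _ hij => Nat.pow_lt_pow_left (scale_strictMono hij) (by norm_num)
  · exact fun i _ _ => pow_pos (scale_pos i) 7
  · intro i _ hi
    constructor
    · intro hodd
      have := Nat.odd_iff.1 hodd
      exact card_hsum_witness_lt hi (by omega) (by omega)
    · intro heven
      have := Nat.even_iff.1 heven
      exact card_hsum_witness_lt hi (by omega) (by omega)

theorem stmt_12 (m : ℕ) (hm : 3 ≤ m) :
    ∃ A B : Finset ℤ, ∃ hs : ℕ → ℕ,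
      A.Nonempty ∧ B.Nonempty ∧ A.card = B.card ∧
      StrictMonoOn hs (Finset.Icc 1 m) ∧ (∀ i, 1 ≤ i → i ≤ m → 0 < hs i) ∧
      ∀ i, 1 ≤ i → i ≤ m →
        (Odd i → (hsum (hs i) B).card < (hsum (hs i) A).card) ∧
        (Even i → (hsum (hs i) A).card < (hsum (hs i) B).card) :=
  stmt_12_general m
end
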